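/- Let V ∈ Cₙ and suppose [e^i]: H^{-i}(V,d) → H^i(V,d) is an isomorphism for all i (the Lefschetz property). Then ker(d) ∩ im(δ) = im(d) ∩ im(δ). -/

import Mathlib

/-- A module over the 5-dimensional Lie superalgebra `g` (generators `e, f, h, d, δ` with
graded commutation relations `[e,f]=h`, `[e,h]=-2e`, `[f,h]=2f`, `[e,d]=0`, `[f,d]=δ`,
`[h,d]=d`, `[e,δ]=d`, `[f,δ]=0`, `[h,δ]=-δ`, `d²=δ²=0`, `dδ+δd=0`) lying in the category
`𝒞ₙ`: the operator `h` acts diagonalizably with integer eigenvalues, all in `[-n, n]`.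
This is encoded by a weight-space decomposition `V = ⊕ weight i`, `-n ≤ i ≤ n`, on which
`h` acts by the scalar `i`, and with respect to which `e, f, d, δ` have degrees
`+2, -2, +1, -1` respectively. -/
structure GRep (n : ℕ) (V : Type*) [AddCommGroup V] [Module ℝ V] where
  e : Module.End ℝ V
  f : Module.End ℝ V
  h : Module.End ℝ V
  d : Module.End ℝ V
  δ : Module.End ℝ V
  comm_ef : e * f - f * e = h
  comm_eh : e * h - h * e = (-2 : ℝ) • e
  comm_fh : f * h - h * f = (2 : ℝ) • f
  comm_ed : e * d - d * e = 0
  comm_fd : f * d - d * f = δ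
  comm_hd : h * d - d * h = d
  comm_eδ : e * δ - δ * e = d
  comm_fδ : f * δ - δ * f = 0
  comm_hδ : h * δ - δ * h = -δ
  d_sq : d * d = 0
  δ_sq : δ * δ = 0
  comm_dδ : d * δ + δ * d = 0
  weight : ℤ → Submodule ℝ V
  weight_isInternal : DirectSum.IsInternal weight
  weight_bounded : ∀ i : ℤ, (n : ℤ) < |i| → weight i = ⊥
  h_weight : ∀ i : ℤ, ∀ v ∈ weight i, h v = (i : ℝ) • v
  e_weight : ∀ i : ℤ, ∀ v ∈ weight i, e v ∈ weight (i + 2)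
  f_weight : ∀ i : ℤ, ∀ v ∈ weight i, f v ∈ weight (i - 2)
  d_weight : ∀ i : ℤ, ∀ v ∈ weight i, d v ∈ weight (i + 1)
  δ_weight : ∀ i : ℤ, ∀ v ∈ weight i, δ v ∈ weight (i - 1)

namespace GRep
open Polynomial DirectSum

noncomputable def lam (m : ℕ) : ℝ := (m:ℝ) * ((m:ℝ) + 2)

variable {n : ℕ} {V : Type*} [AddCommGroup V] [Module ℝ V] (g : GRep n V)

lemma zero_of_mem_big {t : ℤ} {x : V} (hx : x ∈ g.weight t) (ht : (n:ℤ) < |t|) : x = 0 := by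
  rw [g.weight_bounded t ht] at hx; simpa using hx

lemma epow_mem {t : ℤ} {x : V} (hx : x ∈ g.weight t) (j : ℕ) :
    (g.e^j) x ∈ g.weight (t + 2*j) := by
  induction j with
  | zero => simpa using hx
  | succ j ih =>
      have : (g.e^(j+1)) x = g.e ((g.e^j) x) := by
        rw [pow_succ']; rfl
      rw [this]
      have := g.e_weight _ _ ih
      convert this using 2
      push_cast; ring

lemma fpow_mem {t : ℤ} {x : V} (hx : x ∈ g.weight t) (j : ℕ) :
    (g.f^j) x ∈ g.weight (t - 2*j) := by
  induction j with
  | zero => simpa using hx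
  | succ j ih =>
      have : (g.f^(j+1)) x = g.f ((g.f^j) x) := by
        rw [pow_succ']; rfl
      rw [this]
      have := g.f_weight _ _ ih
      convert this using 2
      push_cast; ring

lemma e_nilp {t : ℤ} {x : V} (hx : x ∈ g.weight t) : (g.e^(n+1)) x = 0 := by
  by_cases h : (n:ℤ) < |t|
  · rw [g.zero_of_mem_big hx h]; simp
  · refine g.zero_of_mem_big (g.epow_mem hx (n+1)) ?_
    push_cast
    rw [not_lt, abs_le] at h
    rw [lt_abs]
    left; omega

lemma f_nilp {t : ℤ} {x : V} (hx : x ∈ g.weight t) : (g.f^(n+1)) x = 0 := by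
  by_cases h : (n:ℤ) < |t|
  · rw [g.zero_of_mem_big hx h]; simp
  · refine g.zero_of_mem_big (g.fpow_mem hx (n+1)) ?_
    push_cast
    rw [not_lt, abs_le] at h
    rw [lt_abs]
    right; omega

/-! ### Operator identities -/

lemma ed_swap : g.e * g.d = g.d * g.e := by
  have := g.comm_ed; rwa [sub_eq_zero] at this

lemma epow_d (j : ℕ) : g.e^j * g.d = g.d * g.e^j := by
  induction j with
  | zero => simp
  | succ j ih =>
      rw [pow_succ, mul_assoc, g.ed_swap, ← mul_assoc, ih, mul_assoc]

lemma he_swap : g.h * g.e = g.e * g.h + (2:ℝ) • g.e := by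
  have h2 : g.e * g.h = (-2:ℝ) • g.e + g.h * g.e := sub_eq_iff_eq_add.mp g.comm_eh
  rw [h2]; module

lemma hf_swap : g.h * g.f = g.f * g.h - (2:ℝ) • g.f := by
  have h2 : g.f * g.h = (2:ℝ) • g.f + g.h * g.f := sub_eq_iff_eq_add.mp g.comm_fh
  rw [h2]; module

lemma ef_swap : g.e * g.f = g.f * g.e + g.h := sub_eq_iff_eq_add'.mp g.comm_ef

lemma fd_swap : g.f * g.d = g.d * g.f + g.δ := sub_eq_iff_eq_add'.mp g.comm_fd

lemma fδ_swap : g.f * g.δ = g.δ * g.f := by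
  have := g.comm_fδ; rwa [sub_eq_zero] at this

lemma δe_swap : g.δ * g.e = g.e * g.δ - g.d := by
  have h2 : g.e * g.δ = g.d + g.δ * g.e := sub_eq_iff_eq_add.mp g.comm_eδ
  rw [h2]; module

lemma h_epow (j : ℕ) : g.h * g.e^j = g.e^j * g.h + ((2*j : ℕ) : ℝ) • g.e^j := by
  induction j with
  | zero => simp
  | succ j ih =>
      rw [pow_succ, ← mul_assoc, ih]
      rw [add_mul, smul_mul_assoc, mul_assoc, g.he_swap]
      rw [mul_add, ← mul_assoc, mul_smul_comm, ← pow_succ]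
      push_cast
      module

lemma h_fpow (j : ℕ) : g.h * g.f^j = g.f^j * g.h - ((2*j : ℕ) : ℝ) • g.f^j := by
  induction j with
  | zero => simp
  | succ j ih =>
      rw [pow_succ, ← mul_assoc, ih]
      rw [sub_mul, smul_mul_assoc, mul_assoc, g.hf_swap]
      rw [mul_sub, ← mul_assoc, mul_smul_comm, ← pow_succ]
      push_cast
      module

lemma δ_epow (j : ℕ) : g.δ * g.e^(j+1)
    = g.e^(j+1) * g.δ - (((j:ℝ)+1)) • (g.e^j * g.d) := by
  induction j with
  | zero => simpa using g.δe_swap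
  | succ j ih =>
      have hfe : g.δ * g.e = g.e * g.δ - g.d := g.δe_swap
      have hde : g.d * g.e = g.e * g.d := (g.ed_swap).symm
      rw [pow_succ (g.e) (j+1), ← mul_assoc, ih]
      simp only [sub_mul, smul_mul_assoc, mul_assoc]
      rw [hfe, hde]
      simp only [mul_sub, mul_add, mul_smul_comm, ← mul_assoc, ← pow_succ]
      push_cast
      module

-- f * e^(j+1) = e^(j+1)*f - (j+1) • e^j*h - ((j+1)*j) • e^j
lemma f_epow (j : ℕ) : g.f * g.e^(j+1)
    = g.e^(j+1) * g.f - ((j:ℝ)+1) • (g.e^j * g.h) - (((j:ℝ)+1)*(j:ℝ)) • g.e^j := by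
  have hfe : g.f * g.e = g.e * g.f - g.h := by rw [g.ef_swap]; module
  induction j with
  | zero =>
      simp only [zero_add, pow_one, pow_zero, one_mul]
      rw [hfe]; push_cast; module
  | succ j ih =>
      have hhe : g.h * g.e = g.e * g.h + (2:ℝ) • g.e := g.he_swap
      rw [pow_succ (g.e) (j+1), ← mul_assoc, ih]
      simp only [sub_mul, smul_mul_assoc, mul_assoc]
      rw [hfe, hhe]
      simp only [mul_sub, mul_add, mul_smul_comm, ← mul_assoc, ← pow_succ]
      push_cast
      module

lemma e_fpow (j : ℕ) : g.e * g.f^(j+1)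
    = g.f^(j+1) * g.e + ((j:ℝ)+1) • (g.f^j * g.h) - (((j:ℝ)+1)*(j:ℝ)) • g.f^j := by
  have hef : g.e * g.f = g.f * g.e + g.h := g.ef_swap
  induction j with
  | zero =>
      simp only [zero_add, pow_one, pow_zero, one_mul]
      rw [hef]; push_cast; module
  | succ j ih =>
      have hhf : g.h * g.f = g.f * g.h - (2:ℝ) • g.f := g.hf_swap
      rw [pow_succ (g.f) (j+1), ← mul_assoc, ih]
      simp only [sub_mul, add_mul, smul_mul_assoc, mul_assoc]
      rw [hef, hhf]
      simp only [mul_sub, mul_add, mul_smul_comm, ← mul_assoc, ← pow_succ]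
      push_cast
      module

/-! ### Casimir -/

noncomputable def Cas : Module.End ℝ V := (4:ℝ) • (g.f * g.e) + g.h * g.h + (2:ℝ) • g.h



lemma swap_lift {R M : Type*} [CommRing R] [AddCommGroup M] [Module R M] {A B Cc : Module.End R M} (hs : A * B = Cc) (X : Module.End R M) :
    A * (B * X) = Cc * X := by rw [← mul_assoc, hs]

lemma Cas_e : g.Cas * g.e = g.e * g.Cas := by
  have r1 : g.f * g.e = g.e * g.f - g.h := by rw [g.ef_swap]; module
  have r2 : g.h * g.e = g.e * g.h + (2:ℝ) • g.e := g.he_swap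
  have r1' := swap_lift r1
  have r2' := swap_lift r2
  rw [Cas]
  simp only [mul_add, add_mul, mul_sub, sub_mul, smul_mul_assoc, mul_smul_comm, mul_assoc,
    r1, r2, r1', r2']
  module

lemma Cas_f : g.Cas * g.f = g.f * g.Cas := by
  have r1 : g.e * g.f = g.f * g.e + g.h := g.ef_swap
  have r2 : g.h * g.f = g.f * g.h - (2:ℝ) • g.f := g.hf_swap
  have r1' := swap_lift r1
  have r2' := swap_lift r2
  rw [Cas]
  simp only [mul_add, add_mul, mul_sub, sub_mul, smul_mul_assoc, mul_smul_comm, mul_assoc,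
    r1, r2, r1', r2']
  module

lemma Cas_apply {t : ℤ} {x : V} (hx : x ∈ g.weight t) :
    g.Cas x = (4:ℝ) • (g.f (g.e x)) + ((t:ℝ)*((t:ℝ)+2)) • x := by
  have hh : g.h x = (t:ℝ) • x := g.h_weight t x hx
  have : g.Cas x = (4:ℝ) • (g.f (g.e x)) + g.h (g.h x) + (2:ℝ) • g.h x := rfl
  rw [this, hh, map_smul, hh, smul_smul, smul_smul]
  module

lemma Cas_mem {t : ℤ} {x : V} (hx : x ∈ g.weight t) : g.Cas x ∈ g.weight t := by
  rw [g.Cas_apply hx]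
  have h1 : g.f (g.e x) ∈ g.weight t := by
    have := g.f_weight _ _ (g.e_weight _ _ hx)
    convert this using 2
    ring
  exact Submodule.add_mem _ (Submodule.smul_mem _ _ h1) (Submodule.smul_mem _ _ hx)

lemma ef_apply {t : ℤ} {x : V} (hx : x ∈ g.weight t) :
    g.e (g.f x) = g.f (g.e x) + (t:ℝ) • x := by
  have h1 : g.e (g.f x) = g.f (g.e x) + g.h x := by
    have := congrArg (fun T : Module.End ℝ V => T x) g.ef_swap
    simpa using this
  rw [h1, g.h_weight t x hx]

lemma Cas_prim {m : ℕ} {x : V} (hf : g.f x = 0) (hx : x ∈ g.weight (-(m:ℤ))) :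
    g.Cas x = lam m • x := by
  have hfe : g.f (g.e x) = ((m:ℝ)) • x := by
    have h1 := g.ef_apply hx
    rw [hf, map_zero] at h1
    have h2 := eq_neg_of_add_eq_zero_left h1.symm
    rw [h2]; push_cast; module
  rw [g.Cas_apply hx, hfe, smul_smul]
  simp only [lam]
  push_cast
  module

/-! ### Generalized eigenspaces of the Casimir -/

noncomputable def GEig (m : ℕ) (x : V) : Prop :=
  (Polynomial.aeval g.Cas ((X - C (lam m))^(n+1))) x = 0

lemma aeval_comm {A B : Module.End ℝ V} (hAB : A * B = B * A) (p : ℝ[X]) :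
    (aeval A p) * B = B * (aeval A p) := by
  induction p using Polynomial.induction_on' with
  | add p q hp hq => rw [map_add, add_mul, mul_add, hp, hq]
  | monomial k a =>
      rw [aeval_monomial]
      have hpow : A^k * B = B * A^k := by
        induction k with
        | zero => simp
        | succ k ih => rw [pow_succ, mul_assoc, hAB, ← mul_assoc, ih, mul_assoc]
      rw [mul_assoc, hpow, ← mul_assoc, ← mul_assoc]
      congr 1
      rw [Algebra.commutes]

lemma aeval_mem {t : ℤ} {x : V} (hx : x ∈ g.weight t) (p : ℝ[X]) :
    (aeval g.Cas p) x ∈ g.weight t := by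
  induction p using Polynomial.induction_on' with
  | add p q hp hq => rw [map_add]; exact Submodule.add_mem _ hp hq
  | monomial k a =>
      rw [aeval_monomial]
      have hpow : (g.Cas^k) x ∈ g.weight t := by
        induction k with
        | zero => simpa using hx
        | succ k ih =>
            have : (g.Cas^(k+1)) x = g.Cas ((g.Cas^k) x) := by rw [pow_succ']; rfl
            rw [this]; exact g.Cas_mem ih
      have : ((algebraMap ℝ (Module.End ℝ V)) a * g.Cas ^ k) x = a • ((g.Cas^k) x) := by
        simp [Algebra.algebraMap_eq_smul_one]
      rw [this]
      exact Submodule.smul_mem _ _ hpow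

lemma eig_collapse {m : ℕ} {c : ℝ} {x : V} (hG : g.GEig m x) (hc : g.Cas x = c • x)
    (hne : c ≠ lam m) : x = 0 := by
  have key : ∀ K : ℕ, ((aeval g.Cas ((X - C (lam m))^K))) x = (c - lam m)^K • x := by
    intro K
    induction K with
    | zero => simp
    | succ K ih =>
        rw [pow_succ, map_mul]
        have : (aeval g.Cas ((X : ℝ[X]) - C (lam m))) = g.Cas - (algebraMap ℝ _) (lam m) := by
          simp
        simp only [Module.End.mul_apply]
        rw [this]
        have hx1 : (g.Cas - (algebraMap ℝ (Module.End ℝ V)) (lam m)) x = (c - lam m) • x := by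
          simp [Algebra.algebraMap_eq_smul_one, hc, sub_smul]
        rw [hx1, map_smul, ih, smul_smul, pow_succ]
        ring_nf
    
  have h0 := hG
  rw [GEig, key (n+1)] at h0
  have hne2 : (c - lam m)^(n+1) ≠ 0 := pow_ne_zero _ (sub_ne_zero.mpr hne)
  exact (smul_eq_zero.mp h0).resolve_left hne2

lemma eig_to_GEig {m : ℕ} {x : V} (hc : g.Cas x = lam m • x) : g.GEig m x := by
  have key : ∀ K : ℕ, ((aeval g.Cas ((X - C (lam m))^K))) x = (lam m - lam m)^K • x := by
    intro K
    induction K with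
    | zero => simp
    | succ K ih =>
        rw [pow_succ, map_mul]
        have hXC : (aeval g.Cas ((X : ℝ[X]) - C (lam m))) = g.Cas - (algebraMap ℝ _) (lam m) := by
          simp
        simp only [Module.End.mul_apply]
        rw [hXC]
        have hx1 : (g.Cas - (algebraMap ℝ (Module.End ℝ V)) (lam m)) x = (lam m - lam m) • x := by
          simp [Algebra.algebraMap_eq_smul_one, hc, sub_smul]
        rw [hx1, map_smul, ih, smul_smul, pow_succ]
        ring_nf
  rw [GEig, key (n+1)]
  simp

lemma GEig_e {m : ℕ} {x : V} (hG : g.GEig m x) : g.GEig m (g.e x) := by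
  rw [GEig] at hG ⊢
  have := aeval_comm g.Cas_e ((X - C (lam m))^(n+1))
  have h2 := congrArg (fun T : Module.End ℝ V => T x) this
  simp only [Module.End.mul_apply] at h2
  rw [h2, hG, map_zero]

lemma GEig_f {m : ℕ} {x : V} (hG : g.GEig m x) : g.GEig m (g.f x) := by
  rw [GEig] at hG ⊢
  have := aeval_comm g.Cas_f ((X - C (lam m))^(n+1))
  have h2 := congrArg (fun T : Module.End ℝ V => T x) this
  simp only [Module.End.mul_apply] at h2
  rw [h2, hG, map_zero]

/-! ### Injectivity and vanishing -/

lemma neg_ker_e {t : ℤ} {x : V} (ht : t ≤ -1) (hx : x ∈ g.weight t) (he : g.e x = 0) :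
    x = 0 := by
  have key : ∀ j : ℕ, (g.f^(j+1)) x = 0 → (g.f^j) x = 0 := by
    intro j hj
    have hid := congrArg (fun T : Module.End ℝ V => T x) (g.e_fpow j)
    simp only [Module.End.mul_apply, LinearMap.add_apply, LinearMap.sub_apply,
      LinearMap.smul_apply] at hid
    rw [hj, map_zero, he, map_zero, g.h_weight t x hx, map_smul] at hid
    have hid2 : (0:V) = (((j:ℝ)+1) * ((t:ℝ) - (j:ℝ))) • ((g.f^j) x) := by
      rw [hid]; module
    have hc : (((j:ℝ)+1) * ((t:ℝ) - (j:ℝ))) ≠ 0 := by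
      have h1 : (0:ℝ) < (j:ℝ)+1 := by positivity
      have h2 : (t:ℝ) - (j:ℝ) < 0 := by
        have : (t:ℝ) ≤ -1 := by exact_mod_cast ht
        have : (0:ℝ) ≤ (j:ℝ) := Nat.cast_nonneg j
        linarith
      exact mul_ne_zero (ne_of_gt h1) (ne_of_lt h2)
    have := (smul_eq_zero.mp hid2.symm).resolve_left hc
    exact this
  have down : ∀ j : ℕ, (g.f^j) x = 0 → x = 0 := by
    intro j
    induction j with
    | zero => intro hj; simpa using hj
    | succ j ih => intro hj; exact ih (key j hj)
  exact down (n+1) (g.f_nilp hx)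

lemma e_inj_G {m : ℕ} {t : ℤ} {x : V} (hx : x ∈ g.weight t) (hG : g.GEig m x)
    (he : g.e x = 0) (hne : (t:ℝ)*((t:ℝ)+2) ≠ lam m) : x = 0 := by
  have hC : g.Cas x = ((t:ℝ)*((t:ℝ)+2)) • x := by
    rw [g.Cas_apply hx, he, map_zero, smul_zero, zero_add]
  exact g.eig_collapse hG hC hne

lemma f_inj_G {m : ℕ} {t : ℤ} {x : V} (hx : x ∈ g.weight t) (hG : g.GEig m x)
    (hf : g.f x = 0) (hne : (t:ℝ)*((t:ℝ)-2) ≠ lam m) : x = 0 := by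
  have hfe : g.f (g.e x) = (-(t:ℝ)) • x := by
    have h1 := g.ef_apply hx
    rw [hf, map_zero] at h1
    have h2 := eq_neg_of_add_eq_zero_left h1.symm
    rw [h2]; module
  have hC : g.Cas x = ((t:ℝ)*((t:ℝ)-2)) • x := by
    rw [g.Cas_apply hx, hfe, smul_smul]
    module
  exact g.eig_collapse hG hC hne

lemma vanish_above {m : ℕ} {t : ℤ} {x : V} (hx : x ∈ g.weight t) (hG : g.GEig m x)
    (ht : (m:ℤ) < t) : x = 0 := by
  have key : ∀ j : ℕ, ∀ t : ℤ, ∀ x : V, x ∈ g.weight t → g.GEig m x → (m:ℤ) < t →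
      (g.e^j) x = 0 → x = 0 := by
    intro j
    induction j with
    | zero => intro t x _ _ _ hj; simpa using hj
    | succ j ih =>
        intro t x hx hG ht hj
        have hj' : (g.e^j) (g.e x) = 0 := by
          rw [← Module.End.mul_apply, ← pow_succ]; exact hj
        have hez : g.e x = 0 :=
          ih (t+2) (g.e x) (g.e_weight t x hx) (g.GEig_e hG) (by omega) hj'
        refine g.e_inj_G hx hG hez ?_
        have hmt : (m:ℝ) < (t:ℝ) := by exact_mod_cast ht
        have hm0 : (0:ℝ) ≤ (m:ℝ) := Nat.cast_nonneg m
        rw [lam]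
        nlinarith
  exact key (n+1) t x hx hG ht (g.e_nilp hx)

lemma vanish_below {m : ℕ} {t : ℤ} {x : V} (hx : x ∈ g.weight t) (hG : g.GEig m x)
    (ht : t < -(m:ℤ)) : x = 0 := by
  have key : ∀ j : ℕ, ∀ t : ℤ, ∀ x : V, x ∈ g.weight t → g.GEig m x → t < -(m:ℤ) →
      (g.f^j) x = 0 → x = 0 := by
    intro j
    induction j with
    | zero => intro t x _ _ _ hj; simpa using hj
    | succ j ih =>
        intro t x hx hG ht hj
        have hj' : (g.f^j) (g.f x) = 0 := by
          rw [← Module.End.mul_apply, ← pow_succ]; exact hj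
        have hfz : g.f x = 0 :=
          ih (t-2) (g.f x) (g.f_weight t x hx) (g.GEig_f hG) (by omega) hj'
        refine g.f_inj_G hx hG hfz ?_
        have hmt : (t:ℝ) < -(m:ℝ) := by exact_mod_cast ht
        have hm0 : (0:ℝ) ≤ (m:ℝ) := Nat.cast_nonneg m
        rw [lam]
        nlinarith
  exact key (n+1) t x hx hG ht (g.f_nilp hx)

/-! ### Casimir annihilation and decomposition -/

lemma lam_inj {a b : ℕ} (hab : a ≠ b) : lam a ≠ lam b := by
  intro h
  rw [lam, lam] at h
  have hf : ((a:ℝ)-(b:ℝ))*((a:ℝ)+(b:ℝ)+2) = 0 := by linear_combination h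
  have hne : ((a:ℝ)+(b:ℝ)+2) ≠ 0 := by positivity
  have : (a:ℝ) = (b:ℝ) := by
    rcases mul_eq_zero.mp hf with h1 | h2
    · linarith [sub_eq_zero.mp h1]
    · exact absurd h2 hne
  exact hab (by exact_mod_cast this)

lemma cop_base {a b : ℕ} (hab : a ≠ b) :
    IsCoprime ((X : ℝ[X]) - C (lam a)) (X - C (lam b)) :=
  isCoprime_X_sub_C_of_isUnit_sub (isUnit_iff_ne_zero.mpr (sub_ne_zero.mpr (lam_inj hab)))

lemma cop_prod {a : ℕ} {S : Finset ℕ} (ha : a ∉ S) :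
    IsCoprime (((X : ℝ[X]) - C (lam a))^(n+1)) (∏ m ∈ S, ((X : ℝ[X]) - C (lam m))^(n+1)) := by
  refine IsCoprime.prod_right (fun b hb => ?_)
  exact (cop_base (fun hEq : a = b => ha (hEq ▸ hb))).pow

lemma annih_aux : ∀ (N : ℕ) (t : ℤ) (x : V), x ∈ g.weight t → (g.e^N) x = 0 →
    (aeval g.Cas ((∏ m ∈ Finset.range (n+1), ((X:ℝ[X]) - C (lam m)))^N)) x = 0 := by
  intro N
  induction N with
  | zero => intro t x _ hN; simpa using hN
  | succ N ih =>
      intro t x hx hN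
      set A : ℝ[X] := ∏ m ∈ Finset.range (n+1), ((X:ℝ[X]) - C (lam m)) with hA
      have hN' : (g.e^N) (g.e x) = 0 := by
        rw [← Module.End.mul_apply, ← pow_succ]; exact hN
      have hIH := ih (t+2) (g.e x) (g.e_weight t x hx) hN'
      set y : V := (aeval g.Cas (A^N)) x with hy
      have hey : g.e y = 0 := by
        have hcomm := aeval_comm g.Cas_e (A^N)
        have h2 := congrArg (fun T : Module.End ℝ V => T x) hcomm
        simp only [Module.End.mul_apply] at h2
        rw [← hy] at h2
        rw [h2] at hIH
        exact hIH
      have hyw : y ∈ g.weight t := g.aeval_mem hx (A^N)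
      have hAy : (aeval g.Cas A) y = 0 := by
        by_cases hbig : (n:ℤ) < |t|
        · rw [g.zero_of_mem_big hyw hbig, map_zero]
        · by_cases hneg : t ≤ -1
          · rw [g.neg_ker_e hneg hyw hey, map_zero]
          · -- 0 ≤ t ≤ n
            push_neg at hneg
            have ht0 : 0 ≤ t := by omega
            have htn : t ≤ (n:ℤ) := by
              rw [not_lt] at hbig
              rw [abs_le] at hbig
              exact hbig.2
            set m : ℕ := t.toNat with hm
            have hmt : (m:ℤ) = t := Int.toNat_of_nonneg ht0
            have hmem : m ∈ Finset.range (n+1) := by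
              rw [Finset.mem_range]
              omega
            have hCy : g.Cas y = lam m • y := by
              rw [g.Cas_apply hyw, hey, map_zero, smul_zero, zero_add]
              congr 1
              rw [lam]
              have : (m:ℝ) = (t:ℝ) := by exact_mod_cast congrArg (fun z : ℤ => (z:ℝ)) hmt
              rw [this]
            have hsplit : A = (∏ m' ∈ (Finset.range (n+1)).erase m, ((X:ℝ[X]) - C (lam m')))
                * ((X:ℝ[X]) - C (lam m)) := (Finset.prod_erase_mul _ _ hmem).symm
            rw [hsplit, map_mul, Module.End.mul_apply]
            have : (aeval g.Cas ((X:ℝ[X]) - C (lam m))) y = 0 := by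
              rw [map_sub, aeval_X, aeval_C, LinearMap.sub_apply]
              rw [hCy]
              simp [Algebra.algebraMap_eq_smul_one]
            rw [this, map_zero]
      rw [pow_succ', map_mul, Module.End.mul_apply, ← hy, hAy]

lemma annih {t : ℤ} {x : V} (hx : x ∈ g.weight t) :
    (aeval g.Cas (∏ m ∈ Finset.range (n+1), ((X:ℝ[X]) - C (lam m))^(n+1))) x = 0 := by
  rw [Finset.prod_pow]
  exact g.annih_aux (n+1) t x hx (g.e_nilp hx)

lemma decomp_aux (S : Finset ℕ) : ∀ (x : V) (t : ℤ), x ∈ g.weight t →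
    (aeval g.Cas (∏ m ∈ S, ((X:ℝ[X]) - C (lam m))^(n+1))) x = 0 →
    ∃ z : ℕ → V, (∀ m, z m ∈ g.weight t ∧ g.GEig m (z m)) ∧ x = ∑ m ∈ S, z m := by
  induction S using Finset.induction_on with
  | empty =>
      intro x t hx h0
      simp only [Finset.prod_empty, map_one, Module.End.one_apply] at h0
      exact ⟨fun _ => 0, fun m => ⟨Submodule.zero_mem _, by rw [GEig, map_zero]⟩, by simp [h0]⟩
  | insert _ _ ha ih =>
      rename_i a S
      intro x t hx h0
      set P : ℝ[X] := ((X:ℝ[X]) - C (lam a))^(n+1) with hP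
      set Q : ℝ[X] := ∏ m ∈ S, ((X:ℝ[X]) - C (lam m))^(n+1) with hQ
      rw [Finset.prod_insert ha] at h0
      rw [← hP, ← hQ] at h0
      obtain ⟨u, v, huv⟩ := cop_prod (n := n) ha
      rw [← hP, ← hQ] at huv
      have hxsplit : x = (aeval g.Cas (v*Q)) x + (aeval g.Cas (u*P)) x := by
        have h1 : (aeval g.Cas (u*P + v*Q)) x = x := by
          rw [huv, map_one, Module.End.one_apply]
        rw [map_add, LinearMap.add_apply] at h1
        exact h1.symm.trans (add_comm _ _)
      set x1 : V := (aeval g.Cas (v*Q)) x with hx1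
      set x2 : V := (aeval g.Cas (u*P)) x with hx2
      have hPx1 : (aeval g.Cas P) x1 = 0 := by
        rw [hx1, ← Module.End.mul_apply, ← map_mul]
        have : P * (v * Q) = v * (P * Q) := by ring
        rw [this, map_mul, Module.End.mul_apply, h0, map_zero]
      have hQx2 : (aeval g.Cas Q) x2 = 0 := by
        rw [hx2, ← Module.End.mul_apply, ← map_mul]
        have : Q * (u * P) = u * (P * Q) := by ring
        rw [this, map_mul, Module.End.mul_apply, h0, map_zero]
      obtain ⟨z', hz', hsum'⟩ := ih x2 t (g.aeval_mem hx _) hQx2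
      refine ⟨fun m => if m = a then x1 else z' m, ?_, ?_⟩
      · intro m
        by_cases hma : m = a
        · subst hma
          simp only [if_pos rfl]
          exact ⟨g.aeval_mem hx _, hPx1⟩
        · simp only [if_neg hma]
          exact hz' m
      · rw [Finset.sum_insert ha, if_pos rfl]
        have : ∑ m ∈ S, (if m = a then x1 else z' m) = ∑ m ∈ S, z' m := by
          refine Finset.sum_congr rfl (fun m hm => ?_)
          have : m ≠ a := fun hEq => ha (hEq ▸ hm)
          rw [if_neg this]
        rw [this, ← hsum']
        exact hxsplit

lemma decomp {t : ℤ} {x : V} (hx : x ∈ g.weight t) :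
    ∃ z : ℕ → V, (∀ m, z m ∈ g.weight t ∧ g.GEig m (z m)) ∧
      x = ∑ m ∈ Finset.range (n+1), z m :=
  g.decomp_aux (Finset.range (n+1)) x t hx (g.annih hx)

lemma indep {S : Finset ℕ} {z : ℕ → V} (hz : ∀ m ∈ S, g.GEig m (z m))
    (hsum : ∑ m ∈ S, z m = 0) : ∀ m ∈ S, z m = 0 := by
  intro m0 hm0
  set B : ℝ[X] := ∏ m ∈ S.erase m0, ((X:ℝ[X]) - C (lam m))^(n+1) with hB
  have hBzm : ∀ m ∈ S.erase m0, (aeval g.Cas B) (z m) = 0 := by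
    intro m hm
    have hsplit : B = (∏ m' ∈ (S.erase m0).erase m, ((X:ℝ[X]) - C (lam m'))^(n+1))
        * ((X:ℝ[X]) - C (lam m))^(n+1) := (Finset.prod_erase_mul _ _ hm).symm
    rw [hsplit, map_mul, Module.End.mul_apply]
    have := hz m (Finset.mem_of_mem_erase hm)
    rw [GEig] at this
    rw [this, map_zero]
  have hBz0 : (aeval g.Cas B) (z m0) = 0 := by
    have hz0eq : z m0 = -∑ m ∈ S.erase m0, z m := by
      have h := Finset.add_sum_erase S z hm0
      rw [hsum] at h
      have := eq_neg_of_add_eq_zero_left h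
      exact this
    rw [hz0eq, map_neg, map_sum]
    rw [Finset.sum_congr rfl hBzm]
    simp
  obtain ⟨u, v, huv⟩ := cop_prod (n := n) (Finset.notMem_erase m0 S)
  have h1 : (aeval g.Cas (u*((X:ℝ[X]) - C (lam m0))^(n+1) + v*B)) (z m0) = z m0 := by
    rw [huv, map_one, Module.End.one_apply]
  rw [← h1, map_add, LinearMap.add_apply, map_mul, map_mul]
  rw [Module.End.mul_apply, Module.End.mul_apply]
  have hG := hz m0 hm0
  rw [GEig] at hG
  rw [hG, hBz0, map_zero, map_zero]
  simp

/-! ### Primitive decomposition -/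

lemma GEig_epow {m : ℕ} {x : V} (hG : g.GEig m x) (j : ℕ) : g.GEig m ((g.e^j) x) := by
  induction j with
  | zero => simpa using hG
  | succ j ih =>
      have : (g.e^(j+1)) x = g.e ((g.e^j) x) := by rw [pow_succ']; rfl
      rw [this]; exact g.GEig_e ih

lemma GEig_fpow {m : ℕ} {x : V} (hG : g.GEig m x) (j : ℕ) : g.GEig m ((g.f^j) x) := by
  induction j with
  | zero => simpa using hG
  | succ j ih =>
      have : (g.f^(j+1)) x = g.f ((g.f^j) x) := by rw [pow_succ']; rfl
      rw [this]; exact g.GEig_f ih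

lemma prim_fe_pow {m : ℕ} {p : V} (hp : g.f p = 0) (hw : p ∈ g.weight (-(m:ℤ))) (i : ℕ) :
    g.f ((g.e^(i+1)) p) = (((i:ℝ)+1) * ((m:ℝ) - (i:ℝ))) • ((g.e^i) p) := by
  have hid := congrArg (fun T : Module.End ℝ V => T p) (g.f_epow i)
  simp only [Module.End.mul_apply, LinearMap.add_apply, LinearMap.sub_apply,
    LinearMap.smul_apply] at hid
  rw [hp, map_zero, g.h_weight _ _ hw, map_smul] at hid
  rw [hid]
  push_cast
  module

noncomputable def cst (m : ℕ) (j : ℕ) : ℝ :=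
  ∏ i ∈ Finset.range j, (((i:ℝ)+1) * ((m:ℝ) - (i:ℝ)))

lemma cst_ne_zero {m j : ℕ} (hj : j ≤ m) : cst m j ≠ 0 := by
  rw [cst]
  refine Finset.prod_ne_zero_iff.mpr (fun i hi => ?_)
  rw [Finset.mem_range] at hi
  have h1 : (0:ℝ) < (i:ℝ)+1 := by positivity
  have h2 : (0:ℝ) < (m:ℝ) - (i:ℝ) := by
    have : (i:ℝ) < (m:ℝ) := by exact_mod_cast lt_of_lt_of_le hi hj
    linarith
  positivity

lemma prim_fpow_epow {m : ℕ} {p : V} (hp : g.f p = 0) (hw : p ∈ g.weight (-(m:ℤ))) (j : ℕ) :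
    (g.f^j) ((g.e^j) p) = cst m j • p := by
  induction j with
  | zero => simp [cst]
  | succ j ih =>
      have h1 : (g.f^(j+1)) ((g.e^(j+1)) p) = (g.f^j) (g.f ((g.e^(j+1)) p)) := by
        rw [pow_succ (g.f) j]; rfl
      rw [h1, g.prim_fe_pow hp hw j, map_smul, ih, smul_smul]
      congr 1
      rw [cst, cst, Finset.prod_range_succ]
      ring

lemma bottom {m : ℕ} {t : ℤ} {x : V} (hx : x ∈ g.weight t) (hG : g.GEig m x)
    (hxne : x ≠ 0) :
    ∃ b : ℕ, 1 ≤ b ∧ (g.f^b) x = 0 ∧ (g.f^(b-1)) x ≠ 0 ∧ t - 2*((b:ℤ)-1) = -(m:ℤ) := by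
  classical
  have hex : ∃ b : ℕ, (g.f^b) x = 0 := ⟨n+1, g.f_nilp hx⟩
  set b := Nat.find hex with hb
  have hfb : (g.f^b) x = 0 := Nat.find_spec hex
  have hb1 : 1 ≤ b := by
    rcases Nat.eq_zero_or_pos b with h0 | h1
    · exfalso; apply hxne; have := hfb; rw [h0] at this; simpa using this
    · exact h1
  have hfbm : (g.f^(b-1)) x ≠ 0 := Nat.find_min hex (by omega)
  set y : V := (g.f^(b-1)) x with hy
  have hyw : y ∈ g.weight (t - 2*((b:ℤ)-1)) := by
    have := g.fpow_mem hx (b-1)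
    convert this using 2
    push_cast [Nat.cast_sub hb1]
    ring
  have hyG : g.GEig m y := g.GEig_fpow hG (b-1)
  have hfy : g.f y = 0 := by
    rw [hy, ← Module.End.mul_apply, ← pow_succ']
    have : b - 1 + 1 = b := by omega
    rw [this]; exact hfb
  set t' : ℤ := t - 2*((b:ℤ)-1) with ht'
  refine ⟨b, hb1, hfb, hfbm, ?_⟩
  have hup : t' ≤ (m:ℤ) := by
    by_contra hc
    push_neg at hc
    exact hfbm (g.vanish_above hyw hyG hc)
  have hreal : (t':ℝ)*((t':ℝ)-2) = lam m := by
    by_contra hc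
    exact hfbm (g.f_inj_G hyw hyG hfy hc)
  have hfact : ((t':ℝ)+(m:ℝ))*((t':ℝ)-(m:ℝ)-2) = 0 := by
    rw [lam] at hreal
    linear_combination hreal
  have h2ne : ((t':ℝ)-(m:ℝ)-2) ≠ 0 := by
    have : (t':ℝ) ≤ (m:ℝ) := by exact_mod_cast hup
    linarith
  have h1z : (t':ℝ)+(m:ℝ) = 0 := by
    rcases mul_eq_zero.mp hfact with h' | h'
    · exact h'
    · exact absurd h' h2ne
  have hfin : t' = -(m:ℤ) := by
    have h3 : ((t' : ℤ) : ℝ) = ((-(m:ℤ) : ℤ) : ℝ) := by push_cast; linarith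
    exact_mod_cast h3
  rw [ht'] at hfin
  exact hfin

lemma prim_extract {m : ℕ} {t : ℤ} {x : V} (hx : x ∈ g.weight t) (hG : g.GEig m x)
    (hxne : x ≠ 0) :
    ∃ j : ℕ, j ≤ m ∧ t = -(m:ℤ) + 2*j ∧
      x = (cst m j)⁻¹ • ((g.e^j) ((g.f^j) x)) ∧ g.f ((g.f^j) x) = 0 := by
  obtain ⟨b, hb1, hfb, hfbm, hbt⟩ := g.bottom hx hG hxne
  set j : ℕ := b - 1 with hj
  have hjb : (j:ℤ) = (b:ℤ) - 1 := by omega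
  have ht : t = -(m:ℤ) + 2*j := by omega
  set p : V := (g.f^j) x with hp
  have hpw : p ∈ g.weight (-(m:ℤ)) := by
    have := g.fpow_mem hx j
    have heq : t - 2*(j:ℤ) = -(m:ℤ) := by omega
    rwa [heq] at this
  have hpf : g.f p = 0 := by
    rw [hp, ← Module.End.mul_apply, ← pow_succ']
    have : j + 1 = b := by omega
    rw [this]; exact hfb
  have hjm : j ≤ m := by
    have hupx : t ≤ (m:ℤ) := by
      by_contra hc
      push_neg at hc
      exact hxne (g.vanish_above hx hG hc)
    omega
  refine ⟨j, hjm, ht, ?_, hpf⟩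
  set c : ℝ := cst m j with hc
  have hcne : c ≠ 0 := cst_ne_zero hjm
  set z : V := x - c⁻¹ • ((g.e^j) p) with hz
  have hfz : (g.f^j) z = 0 := by
    rw [hz, map_sub, map_smul, g.prim_fpow_epow hpf hpw j, ← hp, smul_smul,
      inv_mul_cancel₀ hcne, one_smul, sub_self]
  have hzw : z ∈ g.weight t := by
    rw [hz]
    refine Submodule.sub_mem _ hx (Submodule.smul_mem _ _ ?_)
    have := g.epow_mem hpw j
    have heq : -(m:ℤ) + 2*(j:ℤ) = t := by omega
    rwa [heq] at this
  have hzG : g.GEig m z := by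
    rw [hz, GEig, map_sub, map_smul]
    have h1 : (aeval g.Cas ((X - C (lam m)) ^ (n + 1))) x = 0 := hG
    have h2 : (aeval g.Cas ((X - C (lam m)) ^ (n + 1))) ((g.e^j) p) = 0 :=
      g.GEig_epow (g.GEig_fpow hG j) j
    rw [h1, h2, smul_zero, sub_zero]
  have hz0 : z = 0 := by
    by_contra hzne
    obtain ⟨bz, hbz1, hfbz, hfbzm, hbzt⟩ := g.bottom hzw hzG hzne
    have : (bz:ℤ) - 1 = (j:ℤ) := by omega
    have hbzj : bz - 1 = j := by omega
    rw [hbzj] at hfbzm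
    exact hfbzm hfz
  have h9 : x - c⁻¹ • (g.e^j) p = 0 := by rw [← hz]; exact hz0
  exact sub_eq_zero.mp h9

/-! ### Applied identities -/

lemma d_d (x : V) : g.d (g.d x) = 0 := by
  have := congrArg (fun T : Module.End ℝ V => T x) g.d_sq
  simpa using this

lemma δ_δ (x : V) : g.δ (g.δ x) = 0 := by
  have := congrArg (fun T : Module.End ℝ V => T x) g.δ_sq
  simpa using this

lemma fδ_apply (x : V) : g.f (g.δ x) = g.δ (g.f x) := by
  have := congrArg (fun T : Module.End ℝ V => T x) g.fδ_swap
  simpa using this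

lemma fd_apply (x : V) : g.f (g.d x) = g.d (g.f x) + g.δ x := by
  have := congrArg (fun T : Module.End ℝ V => T x) g.fd_swap
  simpa using this

lemma d_epow_apply (j : ℕ) (x : V) : (g.e^j) (g.d x) = g.d ((g.e^j) x) := by
  have := congrArg (fun T : Module.End ℝ V => T x) (g.epow_d j)
  simpa using this

lemma δ_epow_apply (j : ℕ) (x : V) :
    g.δ ((g.e^(j+1)) x) = (g.e^(j+1)) (g.δ x) - (((j:ℝ)+1)) • (g.d ((g.e^j) x)) := by
  have := congrArg (fun T : Module.End ℝ V => T x) (g.δ_epow j)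
  simp only [Module.End.mul_apply, LinearMap.sub_apply, LinearMap.smul_apply] at this
  rw [this, g.d_epow_apply]

/-! ### Chain injectivity -/

lemma einj_chain {m : ℕ} : ∀ (j : ℕ) (t : ℤ) (y : V), y ∈ g.weight t → g.GEig m y →
    -(m:ℤ) ≤ t → t + 2*(j:ℤ) ≤ (m:ℤ) + 1 → (g.e^j) y = 0 → y = 0 := by
  intro j
  induction j with
  | zero => intro t y _ _ _ _ hp; simpa using hp
  | succ j ih =>
      intro t y hy hG h1 h2 hpow
      have hpow' : (g.e^j) (g.e y) = 0 := by
        rw [pow_succ (g.e) j] at hpow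
        exact hpow
      have hey : g.e y = 0 := by
        refine ih (t+2) (g.e y) (g.e_weight t y hy) (g.GEig_e hG) (by omega) (by push_cast at h2 ⊢; omega) hpow'
      refine g.e_inj_G hy hG hey ?_
      intro hc
      rw [lam] at hc
      have hfact : ((t:ℝ)-(m:ℝ))*((t:ℝ)+(m:ℝ)+2) = 0 := by linear_combination hc
      have htm : t ≤ (m:ℤ) - 1 := by push_cast at h2; omega
      have hr1 : (t:ℝ) ≤ (m:ℝ) - 1 := by exact_mod_cast htm
      have hr2 : -(m:ℝ) ≤ (t:ℝ) := by exact_mod_cast h1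
      rcases mul_eq_zero.mp hfact with h' | h'
      · linarith
      · linarith

/-! ### Main homogeneous lemma -/

lemma main_hom
    (lef_inj : ∀ k : ℕ, ∀ w ∈ g.weight (-(k : ℤ)), g.d w = 0 →
      (∃ u, (g.e ^ k) w = g.d u) → ∃ u, w = g.d u)
    {s : ℤ} {v u : V} (hdv : g.d v = 0)
    (hu : u ∈ g.weight (s+1)) (hδu : g.δ u = v) :
    ∃ w, v = g.d w := by
  obtain ⟨z, hz, hsum⟩ := g.decomp hu
  have key : ∀ m : ℕ, ∃ A ξ : V, g.δ (z m) = A - g.d ξ ∧ g.GEig m (g.d A) ∧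
      (g.d A = 0 → ∃ w, g.δ (z m) = g.d w) := by
    intro m
    by_cases hzm : z m = 0
    · refine ⟨0, 0, by simp [hzm], ?_, fun _ => ⟨0, by simp [hzm]⟩⟩
      rw [map_zero, GEig, map_zero]
    · obtain ⟨j, hjm, hts, hxeq, hpf⟩ := g.prim_extract (hz m).1 (hz m).2 hzm
      set p : V := (g.f^j) (z m) with hp
      have hpw : p ∈ g.weight (-(m:ℤ)) := by
        have := g.fpow_mem (hz m).1 j
        have heq : s + 1 - 2*(j:ℤ) = -(m:ℤ) := by omega
        rwa [heq] at this
      have hpG : g.GEig m p := g.GEig_fpow (hz m).2 j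
      set q : V := g.δ p with hq
      have hqw : q ∈ g.weight (-(m:ℤ) - 1) := g.δ_weight _ _ hpw
      set c : ℝ := cst m j with hc
      have hcne : c ≠ 0 := cst_ne_zero hjm
      obtain ⟨ξ, hAform⟩ : ∃ ξ : V, g.δ (z m) = c⁻¹ • ((g.e^j) q) - g.d ξ := by
        cases j with
        | zero =>
            refine ⟨0, ?_⟩
            rw [map_zero, sub_zero]
            conv_lhs => rw [hxeq]
            rw [map_smul]
            simp [hq, hp]
        | succ j' =>
            refine ⟨c⁻¹ • (((j':ℝ)+1) • ((g.e^j') p)), ?_⟩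
            conv_lhs => rw [hxeq]
            rw [map_smul, g.δ_epow_apply j' p, ← hq]
            simp only [map_smul]
            module
      refine ⟨c⁻¹ • ((g.e^j) q), ξ, hAform, ?_, ?_⟩
      · rw [map_smul, ← g.d_epow_apply]
        have hdqprim : g.Cas (g.d q) = lam m • (g.d q) := by
          refine g.Cas_prim ?_ ?_
          · rw [g.fd_apply, hq, g.fδ_apply, hpf, map_zero, g.δ_δ, add_zero, map_zero]
          · have := g.d_weight _ _ hqw
            have heq : -(m:ℤ) - 1 + 1 = -(m:ℤ) := by ring
            rwa [heq] at this
        have hG1 : g.GEig m (g.d q) := g.eig_to_GEig hdqprim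
        have hG2 : g.GEig m ((g.e^j) (g.d q)) := g.GEig_epow hG1 j
        rw [GEig, map_smul]
        rw [hG2]
        simp
      · intro hdA0
        -- d A = c⁻¹ • e^j (d q) = 0  ⟹ e^j (d q) = 0
        rw [map_smul, ← g.d_epow_apply] at hdA0
        have hpow0 : (g.e^j) (g.d q) = 0 := by
          rcases smul_eq_zero.mp hdA0 with h' | h'
          · exact absurd h' (inv_ne_zero hcne)
          · exact h'
        have hdqw : g.d q ∈ g.weight (-(m:ℤ)) := by
          have := g.d_weight _ _ hqw
          have heq : -(m:ℤ) - 1 + 1 = -(m:ℤ) := by ring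
          rwa [heq] at this
        have hfdq : g.f (g.d q) = 0 := by
          rw [g.fd_apply, hq, g.fδ_apply, hpf, map_zero, g.δ_δ, add_zero, map_zero]
        have hG1 : g.GEig m (g.d q) := g.eig_to_GEig (g.Cas_prim hfdq hdqw)
        have hdq0 : g.d q = 0 :=
          g.einj_chain j (-(m:ℤ)) (g.d q) hdqw hG1 (le_refl _) (by omega) hpow0
        -- e^(m+1) q = d ((m+1) • e^m p)
        have hetop : (g.e^(m+1)) p = 0 := by
          refine g.vanish_above (g.epow_mem hpw (m+1)) (g.GEig_epow hpG (m+1)) ?_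
          push_cast; omega
        have hkey := g.δ_epow_apply m p
        rw [hetop, map_zero, ← hq] at hkey
        have heq1 : (g.e^(m+1)) q = g.d ((((m:ℝ)+1)) • ((g.e^m) p)) := by
          rw [map_smul]
          have := sub_eq_zero.mp hkey.symm
          rw [← this]
        -- apply lef_inj
        have hqw' : q ∈ g.weight (-((m+1 : ℕ) : ℤ)) := by
          have heq : -(m:ℤ) - 1 = -((m+1 : ℕ) : ℤ) := by push_cast; ring
          rwa [heq] at hqw
        obtain ⟨τ, hτ⟩ := lef_inj (m+1) q hqw' hdq0 ⟨_, heq1⟩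
        refine ⟨c⁻¹ • ((g.e^j) τ) - ξ, ?_⟩
        rw [hAform, hτ]
        rw [map_sub, map_smul, ← g.d_epow_apply]
  choose A ξ h1 h2 h3 using key
  have hdAsum : ∑ m ∈ Finset.range (n+1), g.d (A m) = 0 := by
    have hv1 : v = ∑ m ∈ Finset.range (n+1), (A m - g.d (ξ m)) := by
      rw [← hδu, hsum, map_sum]
      exact Finset.sum_congr rfl (fun m _ => h1 m)
    have hv2 : g.d v = ∑ m ∈ Finset.range (n+1), g.d (A m) := by
      rw [hv1, map_sum]
      refine Finset.sum_congr rfl (fun m _ => ?_)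
      rw [map_sub, g.d_d, sub_zero]
    rw [← hv2, hdv]
  have hzero : ∀ m ∈ Finset.range (n+1), g.d (A m) = 0 :=
    g.indep (fun m _ => h2 m) hdAsum
  have hex : ∀ m ∈ Finset.range (n+1), ∃ w, g.δ (z m) = g.d w :=
    fun m hm => h3 m (hzero m hm)
  choose! w hw using hex
  refine ⟨∑ m ∈ Finset.range (n+1), w m, ?_⟩
  rw [← hδu, hsum, map_sum, map_sum]
  exact Finset.sum_congr rfl (fun m hm => hw m hm)

/-! ### Grading projections -/

noncomputable def dec : (⨁ i : ℤ, ↥(g.weight i)) ≃ₗ[ℝ] V :=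
  LinearEquiv.ofBijective (DirectSum.coeLinearMap g.weight) g.weight_isInternal

noncomputable def proj (t : ℤ) : V →ₗ[ℝ] V :=
  (g.weight t).subtype ∘ₗ ((DirectSum.component ℝ ℤ (fun i => ↥(g.weight i)) t) ∘ₗ
    (g.dec.symm : V →ₗ[ℝ] (⨁ i : ℤ, ↥(g.weight i))))

lemma proj_apply (t : ℤ) (v : V) : g.proj t v = ↑((g.dec.symm v) t) := rfl

lemma proj_mem (t : ℤ) (v : V) : g.proj t v ∈ g.weight t := by
  rw [proj_apply]; exact Submodule.coe_mem _

lemma proj_eq_self {t : ℤ} {v : V} (hv : v ∈ g.weight t) : g.proj t v = v := by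
  rw [proj_apply]
  rw [dec]
  rw [g.weight_isInternal.ofBijective_coeLinearMap_of_mem hv]

lemma proj_eq_zero {t t' : ℤ} {v : V} (hv : v ∈ g.weight t) (htt' : t ≠ t') :
    g.proj t' v = 0 := by
  rw [proj_apply]
  rw [dec]
  rw [g.weight_isInternal.ofBijective_coeLinearMap_of_mem_ne htt' hv]
  rfl

lemma proj_sum (v : V) : ∃ S : Finset ℤ, (∀ t, t ∉ S → g.proj t v = 0) ∧
    ∑ t ∈ S, g.proj t v = v := by
  classical
  set x := g.dec.symm v with hx
  refine ⟨DFinsupp.support x, ?_, ?_⟩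
  · intro t ht
    rw [proj_apply, ← hx]
    rw [DFinsupp.notMem_support_iff] at ht
    rw [ht]
    rfl
  · have hsum : ∑ i ∈ DFinsupp.support x, (DirectSum.of (fun i => ↥(g.weight i)) i) (x i) = x :=
      DirectSum.sum_support_of x
    have h2 : ∀ i ∈ DFinsupp.support x, (g.proj i) v
        = g.dec.toLinearMap ((DirectSum.of (fun i => ↥(g.weight i)) i) (x i)) := by
      intro i _
      rw [proj_apply, ← hx]
      show _ = g.dec ((DirectSum.of (fun i => ↥(g.weight i)) i) (x i))
      rw [dec]
      exact (DirectSum.coeLinearMap_of ..).symm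
    rw [Finset.sum_congr rfl h2, ← map_sum, hsum]
    show g.dec x = v
    rw [hx]
    exact g.dec.apply_symm_apply v

lemma proj_shift (T : Module.End ℝ V) (r : ℤ)
    (hT : ∀ i : ℤ, ∀ x ∈ g.weight i, T x ∈ g.weight (i + r)) (t : ℤ) (v : V) :
    g.proj (t+r) (T v) = T (g.proj t v) := by
  obtain ⟨S, hS0, hSsum⟩ := g.proj_sum v
  conv_lhs => rw [← hSsum]
  rw [map_sum, map_sum]
  rw [Finset.sum_eq_single t]
  · exact g.proj_eq_self (hT t _ (g.proj_mem t v))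
  · intro i _ hit
    exact g.proj_eq_zero (hT i _ (g.proj_mem i v)) (by omega)
  · intro htS
    rw [hS0 t htS, map_zero, map_zero]

end GRep

/-- Let `V ∈ 𝒞ₙ` satisfy the Lefschetz property: every
`[e^k] : H^{-k}(V,d) → H^k(V,d)` is an isomorphism. Then
`ker(d) ∩ im(δ) = im(d) ∩ im(δ)`. -/
theorem lefschetz_implies_kd_cap_imδ {n : ℕ} {V : Type*} [AddCommGroup V] [Module ℝ V]
    (g : GRep n V)
    (lef_surj : ∀ k : ℕ, ∀ v ∈ g.weight (k : ℤ), g.d v = 0 →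
      ∃ w ∈ g.weight (-(k : ℤ)), g.d w = 0 ∧ ∃ u, v - (g.e ^ k) w = g.d u)
    (lef_inj : ∀ k : ℕ, ∀ w ∈ g.weight (-(k : ℤ)), g.d w = 0 →
      (∃ u, (g.e ^ k) w = g.d u) → ∃ u, w = g.d u) :
    ∀ v : V, (g.d v = 0 ∧ (∃ u, g.δ u = v)) ↔ ((∃ u, g.d u = v) ∧ (∃ u, g.δ u = v)) := by

  intro v
  constructor
  · rintro ⟨hdv, u, hδu⟩
    refine ⟨?_, ⟨u, hδu⟩⟩
    obtain ⟨S, hS0, hSsum⟩ := g.proj_sum v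
    have hex : ∀ t ∈ S, ∃ w, g.proj t v = g.d w := by
      intro t _
      refine g.main_hom lef_inj (s := t) ?_ (g.proj_mem (t+1) u) ?_
      · have h1 : g.d (g.proj t v) = g.proj (t+1) (g.d v) :=
          (g.proj_shift g.d 1 g.d_weight t v).symm
        rw [h1, hdv, map_zero]
      · have h2 : g.proj ((t+1)+(-1)) (g.δ u) = g.δ (g.proj (t+1) u) :=
          g.proj_shift g.δ (-1) g.δ_weight (t+1) u
        have h3 : (t+1)+(-1 : ℤ) = t := by ring
        rw [h3] at h2
        rw [← h2, hδu]
    choose! w hw using hex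
    refine ⟨∑ t ∈ S, w t, ?_⟩
    rw [map_sum, ← hSsum]
    exact Finset.sum_congr rfl (fun t ht => (hw t ht).symm)
  · rintro ⟨⟨u1, hdu⟩, hδ⟩
    refine ⟨?_, hδ⟩
    rw [← hdu]
    exact g.d_d u1
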